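/- Let Q be a bounded sublinear rate operator on ℬ and let Δ ≥ 0 be a real number such that Δ·‖Q‖ ≤ 2. Then the operator T := I + ΔQ, defined by Tf = f + Δ·Qf, is a sublinear transition operator. -/

import Mathlib

open Filter Topology BoundedContinuousFunction ENNReal NNReal

/-- The space of (possibly nonlinear) operators on the Banach space `X →ᵇ ℝ`
of bounded (continuous, i.e. with `X` discrete: all) real-valued functions. -/
abbrev Op (X : Type*) [TopologicalSpace X] :=
  BoundedContinuousFunction X ℝ → BoundedContinuousFunction X ℝ

/-- The operator seminorm `‖A‖ = sup {‖A f‖/‖f‖ : f ≠ 0}`, a value in `[0,∞]`. -/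
noncomputable def opSemiNorm {X : Type*} [TopologicalSpace X] (A : Op X) : ℝ≥0∞ :=
  ⨆ (f : BoundedContinuousFunction X ℝ) (_ : f ≠ 0), (‖A f‖₊ : ℝ≥0∞) / (‖f‖₊ : ℝ≥0∞)

/-- The operator norm distance `d(A,B) = ‖A 0 − B 0‖∞ + ‖A − B‖`. -/
noncomputable def opDist {X : Type*} [TopologicalSpace X] (A B : Op X) : ℝ≥0∞ :=
  (‖A 0 - B 0‖₊ : ℝ≥0∞) + opSemiNorm (A - B)

/-- Sublinear transition operator: (T1) positive homogeneity, (T2) subadditivity,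
(T3) `T f ≤ sup f` pointwise. -/
def IsSublinearTransition {X : Type*} [TopologicalSpace X] (T : Op X) : Prop :=
  (∀ (c : ℝ), 0 ≤ c → ∀ f, T (c • f) = c • T f) ∧
  (∀ f g, ∀ x, T (f + g) x ≤ T f x + T g x) ∧
  (∀ f, ∀ x, T f x ≤ ⨆ y, f y)

/-- Sublinear rate operator: (Q1) positive homogeneity, (Q2) subadditivity,
(Q3) constants map to zero, (Q4) positive maximum principle. -/
def IsSublinearRate {X : Type*} [TopologicalSpace X] (Q : Op X) : Prop :=
  (∀ (c : ℝ), 0 ≤ c → ∀ f, Q (c • f) = c • Q f) ∧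
  (∀ f g, ∀ x, Q (f + g) x ≤ Q f x + Q g x) ∧
  (∀ (c : ℝ), Q (BoundedContinuousFunction.const X c) = 0) ∧
  (∀ f, ∀ x : X, (⨆ y, f y) = f x → 0 ≤ f x → Q f x ≤ 0)

/-- The Euler approximation `(I + (t/n) Q)^n` (n-fold composition). -/
noncomputable def euler {X : Type*} [TopologicalSpace X] (Q : Op X) (t : ℝ) (n : ℕ) : Op X :=
  (fun f => f + (t / (n : ℝ)) • Q f)^[n]

/-- Uniform continuity of a semigroup `(S_t)_{t ≥ 0}`:
`‖S_s − S_t‖ → 0` as `s → t` (within `s ≥ 0`), for every `t ≥ 0`. -/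
def IsUniformlyContinuousSG {X : Type*} [TopologicalSpace X] (S : ℝ → Op X) : Prop :=
  ∀ t : ℝ, 0 ≤ t →
    Tendsto (fun s => opSemiNorm (S s - S t)) (nhdsWithin t (Set.Ici 0)) (nhds 0)

/-- The indicator function `1_x` of the singleton `{x}`. -/
noncomputable def indic {X : Type*} [TopologicalSpace X] [DiscreteTopology X] (x : X) :
    BoundedContinuousFunction X ℝ :=
  BoundedContinuousFunction.ofNormedAddCommGroup
    (Set.indicator {x} (fun _ => (1 : ℝ))) continuous_of_discreteTopology 1
    (by
      intro y
      classical
      rw [Set.indicator_apply]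
      split_ifs <;> simp)

/-- Downward continuity (continuity from above) of an operator. -/
def DownwardContinuous {X : Type*} [TopologicalSpace X] (A : Op X) : Prop :=
  ∀ (f : ℕ → BoundedContinuousFunction X ℝ) (g : BoundedContinuousFunction X ℝ),
    (∀ n x, f (n + 1) x ≤ f n x) →
    (∀ x, Tendsto (fun n => f n x) atTop (nhds (g x))) →
    ∀ x, Tendsto (fun n => A (f n) x) atTop (nhds (A g x))

/-!
(T1) and (T2) pass from `Q` to `I + ΔQ` because `Δ ≥ 0`. For (T3), let `t = sup f - f x`.
Since `Q` ignores added constants, the positive maximum principle applied to `f + t·1ₓ - sup f`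
gives `Qf(x) ≤ t·Q(-1ₓ)(x)`, and `2·Q(-1ₓ) = Q(1 - 2·1ₓ)` with `‖1 - 2·1ₓ‖ = 1`, so
`Δ·Qf(x) ≤ t·Δ‖Q‖/2 ≤ t`, i.e. `f x + Δ·Qf(x) ≤ sup f`.
-/

section OperatorNorm

variable {X : Type*} [TopologicalSpace X]

theorem nnnorm_apply_le_opSemiNorm_mul (A : Op X) {f : X →ᵇ ℝ} (hf : f ≠ 0) :
    (‖A f‖₊ : ℝ≥0∞) ≤ opSemiNorm A * ‖f‖₊ :=
  (ENNReal.div_le_iff_le_mul (Or.inl (by simpa using hf)) (Or.inl ENNReal.coe_ne_top)).mp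
    (le_iSup₂_of_le f hf le_rfl)

theorem mul_apply_le_of_ofReal_mul_opSemiNorm_le (A : Op X) {Δ : ℝ} {C : ℝ≥0} (hΔ : 0 ≤ Δ)
    (hΔA : ENNReal.ofReal Δ * opSemiNorm A ≤ C) {f : X →ᵇ ℝ} (hf : f ≠ 0) (x : X) :
    Δ * A f x ≤ C * ‖f‖ := by
  have hnorm : ENNReal.ofReal (Δ * ‖A f‖) ≤ ENNReal.ofReal (C * ‖f‖) := by
    rw [ENNReal.ofReal_mul hΔ, ENNReal.ofReal_mul C.coe_nonneg, ofReal_norm,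
      ofReal_norm, ENNReal.ofReal_coe_nnreal]
    calc ENNReal.ofReal Δ * ‖A f‖ₑ ≤ ENNReal.ofReal Δ * (opSemiNorm A * ‖f‖₊) :=
          mul_le_mul_right (nnnorm_apply_le_opSemiNorm_mul A hf) _
      _ ≤ C * ‖f‖ₑ := by rw [← mul_assoc]; exact mul_le_mul_left hΔA _
  calc Δ * A f x ≤ Δ * ‖A f‖ :=
        mul_le_mul_of_nonneg_left ((le_abs_self _).trans ((A f).norm_coe_le_norm x)) hΔ
    _ ≤ C * ‖f‖ := (ENNReal.ofReal_le_ofReal_iff (by positivity)).mp hnorm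

end OperatorNorm

section Indicator

variable {X : Type*} [TopologicalSpace X] [DiscreteTopology X]

@[simp]
theorem indic_apply_self (x : X) : indic x x = 1 := by
  simp [indic]

theorem indic_apply_of_ne {x y : X} (hy : y ≠ x) : indic x y = 0 := by
  simp [indic, hy]

theorem norm_const_one_sub_two_smul_indic_le (x : X) : ‖const X 1 - (2 : ℝ) • indic x‖ ≤ 1 := by
  refine (norm_le zero_le_one).mpr fun y => ?_
  by_cases hy : y = x
  · norm_num [hy]
  · norm_num [indic_apply_of_ne hy]

theorem const_one_sub_two_smul_indic_ne_zero (x : X) : const X 1 - (2 : ℝ) • indic x ≠ 0 := by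
  intro h
  have hx := congr($h x)
  norm_num at hx

end Indicator

namespace IsSublinearRate

variable {X : Type*} [TopologicalSpace X] {Q : Op X}

theorem apply_add_const (hQ : IsSublinearRate Q) (f : X →ᵇ ℝ) (c : ℝ) : Q (f + const X c) = Q f := by
  ext x
  refine le_antisymm ?_ ?_
  · simpa [hQ.2.2.1 c] using hQ.2.1 f (const X c) x
  · have hcancel : f + const X c + const X (-c) = f := by ext; simp
    simpa [hcancel, hQ.2.2.1 (-c)] using hQ.2.1 (f + const X c) (const X (-c)) x

theorem apply_nonpos_of_forall_le (hQ : IsSublinearRate Q) {f : X →ᵇ ℝ} {x : X} (hmax : ∀ y, f y ≤ f x) (h0 : 0 ≤ f x) :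
    Q f x ≤ 0 :=
  have : Nonempty X := ⟨x⟩
  hQ.2.2.2 f x (le_antisymm (ciSup_le hmax) (le_ciSup f.isBounded_range.bddAbove x)) h0

variable [DiscreteTopology X]

theorem apply_le_mul_apply_neg_indic (hQ : IsSublinearRate Q) (f : X →ᵇ ℝ) (x : X) :
    Q f x ≤ ((⨆ y, f y) - f x) * Q (-indic x) x := by
  set M := ⨆ y, f y
  have hfM : ∀ y, f y ≤ M := le_ciSup f.isBounded_range.bddAbove
  set h := f + (M - f x) • indic x - const X M
  have hx : h x = 0 := by simp [h]
  have hmax : ∀ y, h y ≤ h x := fun y => by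
    by_cases hy : y = x
    · rw [hy]
    · simpa [h, hx, indic_apply_of_ne hy] using hfM y
  have hdecomp : f = h + (M - f x) • -indic x + const X M := by
    ext y; simp [h]; ring
  calc Q f x = Q (h + (M - f x) • -indic x) x := by
        rw [← hQ.apply_add_const (h + _) M, ← hdecomp]
    _ ≤ Q h x + Q ((M - f x) • -indic x) x := hQ.2.1 _ _ x
    _ ≤ (M - f x) * Q (-indic x) x := by
      rw [hQ.1 _ (sub_nonneg.mpr (hfM x))]
      have := hQ.apply_nonpos_of_forall_le hmax hx.ge
      simp only [BoundedContinuousFunction.coe_smul, smul_eq_mul]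
      linarith

theorem two_mul_apply_neg_indic (hQ : IsSublinearRate Q) (x : X) :
    2 * Q (-indic x) x = Q (const X 1 - (2 : ℝ) • indic x) x := by
  have : const X 1 - (2 : ℝ) • indic x = (2 : ℝ) • -indic x + const X 1 := by
    ext y; simp; ring
  rw [this, hQ.apply_add_const, hQ.1 2 zero_le_two]
  rfl

theorem mul_apply_le_iSup_sub (hQ : IsSublinearRate Q) {Δ : ℝ} (hΔ : 0 ≤ Δ)
    (hΔQ : ENNReal.ofReal Δ * opSemiNorm Q ≤ 2) (f : X →ᵇ ℝ) (x : X) : Δ * Q f x ≤ (⨆ y, f y) - f x := by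
  have hgap : 0 ≤ (⨆ y, f y) - f x := sub_nonneg.mpr (le_ciSup f.isBounded_range.bddAbove x)
  have hindic : Δ * Q (-indic x) x ≤ 1 := by
    have := mul_apply_le_of_ofReal_mul_opSemiNorm_le Q (C := 2) hΔ (by simpa using hΔQ)
      (const_one_sub_two_smul_indic_ne_zero x) x
    rw [← hQ.two_mul_apply_neg_indic, NNReal.coe_ofNat] at this
    linarith [norm_const_one_sub_two_smul_indic_le x]
  calc Δ * Q f x ≤ Δ * (((⨆ y, f y) - f x) * Q (-indic x) x) :=
        mul_le_mul_of_nonneg_left (hQ.apply_le_mul_apply_neg_indic f x) hΔ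
    _ = ((⨆ y, f y) - f x) * (Δ * Q (-indic x) x) := by ring
    _ ≤ (⨆ y, f y) - f x := mul_le_of_le_one_right hgap hindic

end IsSublinearRate

theorem stmt_5_general {X : Type*} [TopologicalSpace X] [DiscreteTopology X]
    (Q : Op X) (hQ : IsSublinearRate Q)
    (Δ : ℝ) (hΔ : 0 ≤ Δ) (hΔQ : ENNReal.ofReal Δ * opSemiNorm Q ≤ 2) :
    IsSublinearTransition (fun f => f + Δ • Q f) := by
  refine ⟨fun c hc f => ?_, fun f g x => ?_, fun f x => ?_⟩
  · simp only [hQ.1 c hc f, smul_add, smul_comm Δ c]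
  · have := mul_le_mul_of_nonneg_left (hQ.2.1 f g x) hΔ
    simp only [BoundedContinuousFunction.add_apply, BoundedContinuousFunction.smul_apply,
      smul_eq_mul]
    linarith
  · have := hQ.mul_apply_le_iSup_sub hΔ hΔQ f x
    simp only [BoundedContinuousFunction.add_apply, BoundedContinuousFunction.smul_apply,
      smul_eq_mul]
    linarith

theorem stmt_5 {X : Type*} [Countable X] [TopologicalSpace X] [DiscreteTopology X]
    (Q : Op X) (hQ : IsSublinearRate Q) (hQb : opSemiNorm Q ≠ ⊤)
    (Δ : ℝ) (hΔ : 0 ≤ Δ) (hΔQ : ENNReal.ofReal Δ * opSemiNorm Q ≤ 2) :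
    IsSublinearTransition (fun f => f + Δ • Q f) :=
  stmt_5_general Q hQ Δ hΔ hΔQ
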